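/- Let m = 2^ℓ + n with 0 ≤ n < 2^ℓ. Then for 1 ≤ p ≤ ℓ+1 the multilevel error of the Gaussian quasi-interpolation scheme started at spacing 1 satisfies M_{1,p} c_m = c_m − Σ_{j=0}^{p−1} M_{1/2^{j+1}, p−1−j} Q_{1/2^j} c_{n mod 2^j}. -/

import Mathlib

/-! The multilevel error telescopes: `M h (p+1) f = M (h/2) p (f - Q h f)`, and `Q`, hence every
`M h p`, is linear on bounded functions, so `M h p f = f - ∑_{j<p} M (h/2^(j+1)) (p-1-j) (Q (h/2^j) f)`.
For `f = c (2^l + n)` and `j ≤ l`, the operator `Q (1/2^j)` only samples `f` on the grid `2^(-j) ℤ`,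
where `c (2^l + n)` agrees with `c (n % 2^j)` (aliasing).
Linearity of `Q` needs the periodized Gaussian `∑_ℓ psi (y - ℓ)` to be bounded in `y`; shifting `y`
by `⌊y⌋` reduces this to `y ∈ [0, 1]`, where a summable majorant is explicit. -/

open Real

/-- Gaussian. -/
noncomputable def psi (x : ℝ) : ℝ := (1 / Real.sqrt (2 * Real.pi)) * Real.exp (-x ^ 2 / 2)

/-- Gaussian quasi-interpolation at spacing `h`. -/
noncomputable def Q (h : ℝ) (f : ℝ → ℝ) : ℝ → ℝ :=
  fun x => ∑' ℓ : ℤ, f (h * ℓ) * psi (x / h - ℓ)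

/-- `c m x = cos(2πmx)`. -/
noncomputable def c (m : ℕ) (x : ℝ) : ℝ := Real.cos (2 * Real.pi * m * x)

/-- Multilevel error operator: `M h 0 = Id`,
`M h (p+1) f = M h p f − Q (h/2^p) (M h p f)`. -/
noncomputable def M (h : ℝ) : ℕ → (ℝ → ℝ) → (ℝ → ℝ)
  | 0, f => f
  | p + 1, f => M h p f - Q (h / 2 ^ p) (M h p f)

open Set

lemma summable_and_tsum_le_of_sub_int_le {g : ℝ → ℝ} {a : ℤ → ℝ} (hg : ∀ x, 0 ≤ g x)
    (ha : Summable a) (hga : ∀ t, 0 ≤ t → t ≤ 1 → ∀ k : ℤ, g (t - k) ≤ a k) (y : ℝ) :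
    Summable (fun ℓ : ℤ => g (y - ℓ)) ∧ ∑' ℓ : ℤ, g (y - ℓ) ≤ ∑' k, a k := by
  have hshift :
      (fun k => g (y - (Equiv.addRight ⌊y⌋ k : ℤ))) = fun k : ℤ => g (Int.fract y - k) := by
    ext k; rw [Equiv.coe_addRight, Int.fract]; push_cast; ring_nf
  have hle (k : ℤ) : g (Int.fract y - k) ≤ a k :=
    hga _ (Int.fract_nonneg y) (Int.fract_lt_one y).le k
  have hsum : Summable fun k : ℤ => g (Int.fract y - k) :=
    Summable.of_nonneg_of_le (fun _ => hg _) hle ha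
  constructor
  · rw [← (Equiv.addRight ⌊y⌋).summable_iff, Function.comp_def, hshift]
    exact hsum
  · rw [← (Equiv.addRight ⌊y⌋).tsum_eq, hshift]
    exact hsum.tsum_le_tsum hle ha

lemma psi_nonneg (x : ℝ) : 0 ≤ psi x := by
  unfold psi; positivity

-- For `t ∈ [0, 1]`, `(t - k)^2 / 2 ≥ k^2 / 2 - |k| ≥ |k| - 2`.
lemma psi_sub_int_le {t : ℝ} (ht₀ : 0 ≤ t) (ht₁ : t ≤ 1) (k : ℤ) :
    psi (t - k) ≤ 1 / √(2 * π) * exp 2 * exp (-|(k : ℝ)|) := by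
  rw [psi, mul_assoc, ← exp_add]
  gcongr
  rcases le_total 0 (k : ℝ) with hk | hk
  · rw [abs_of_nonneg hk]; nlinarith
  · rw [abs_of_nonpos hk]; nlinarith

lemma summable_exp_neg_abs_int : Summable fun k : ℤ => exp (-|(k : ℝ)|) :=
  .of_nat_of_neg (by simpa using summable_exp_neg_nat) (by simpa using summable_exp_neg_nat)

lemma summable_psi_sub_int (y : ℝ) : Summable fun ℓ : ℤ => psi (y - ℓ) :=
  (summable_and_tsum_le_of_sub_int_le psi_nonneg (summable_exp_neg_abs_int.mul_left _)
    (fun _ => psi_sub_int_le) y).1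

lemma bddAbove_tsum_psi_sub_int : BddAbove (range fun y => ∑' ℓ : ℤ, psi (y - ℓ)) :=
  ⟨_, forall_mem_range.2 (summable_and_tsum_le_of_sub_int_le psi_nonneg
    (summable_exp_neg_abs_int.mul_left _) (fun _ => psi_sub_int_le) · |>.2)⟩

def IsBoundedFun (f : ℝ → ℝ) : Prop := ∃ C, ∀ x, |f x| ≤ C

lemma IsBoundedFun.sub {f g : ℝ → ℝ} (hf : IsBoundedFun f) (hg : IsBoundedFun g) :
    IsBoundedFun (f - g) := by
  obtain ⟨C, hC⟩ := hf
  obtain ⟨D, hD⟩ := hg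
  exact ⟨C + D, fun x => (abs_sub (f x) (g x)).trans (add_le_add (hC x) (hD x))⟩

lemma isBoundedFun_c (m : ℕ) : IsBoundedFun (c m) := ⟨1, fun _ => abs_cos_le_one _⟩

lemma summable_Q_term {f : ℝ → ℝ} (hf : IsBoundedFun f) (h x : ℝ) :
    Summable fun ℓ : ℤ => f (h * ℓ) * psi (x / h - ℓ) := by
  obtain ⟨C, hC⟩ := hf
  refine .of_norm_bounded ((summable_psi_sub_int (x / h)).mul_left C) fun ℓ => ?_
  rw [norm_mul, Real.norm_of_nonneg (psi_nonneg _)]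
  exact mul_le_mul_of_nonneg_right (hC _) (psi_nonneg _)

lemma isBoundedFun_Q {f : ℝ → ℝ} (hf : IsBoundedFun f) (h : ℝ) : IsBoundedFun (Q h f) := by
  obtain ⟨C, hC⟩ := hf
  obtain ⟨B, hB⟩ := bddAbove_tsum_psi_sub_int
  have hC₀ : 0 ≤ C := (abs_nonneg _).trans (hC 0)
  refine ⟨C * B, fun x => ?_⟩
  calc |Q h f x| ≤ C * ∑' ℓ : ℤ, psi (x / h - ℓ) := by
        rw [← Real.norm_eq_abs]
        refine tsum_of_norm_bounded ((summable_psi_sub_int (x / h)).hasSum.mul_left C) fun ℓ => ?_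
        rw [norm_mul, Real.norm_of_nonneg (psi_nonneg _)]
        exact mul_le_mul_of_nonneg_right (hC _) (psi_nonneg _)
    _ ≤ C * B := mul_le_mul_of_nonneg_left (hB (mem_range_self _)) hC₀

lemma Q_sub {f g : ℝ → ℝ} (hf : IsBoundedFun f) (hg : IsBoundedFun g) (h : ℝ) :
    Q h (f - g) = Q h f - Q h g := by
  funext x
  simp only [Q, Pi.sub_apply, sub_mul]
  exact (summable_Q_term hf h x).tsum_sub (summable_Q_term hg h x)

lemma isBoundedFun_M {f : ℝ → ℝ} (hf : IsBoundedFun f) (h : ℝ) (p : ℕ) :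
    IsBoundedFun (M h p f) := by
  induction p with
  | zero => exact hf
  | succ p ih => exact ih.sub (isBoundedFun_Q ih _)

lemma M_sub {f g : ℝ → ℝ} (hf : IsBoundedFun f) (hg : IsBoundedFun g) (h : ℝ) (p : ℕ) :
    M h p (f - g) = M h p f - M h p g := by
  induction p with
  | zero => rfl
  | succ p ih =>
    simp only [M, ih, Q_sub (isBoundedFun_M hf h p) (isBoundedFun_M hg h p)]
    abel

lemma M_succ (h : ℝ) (p : ℕ) (f : ℝ → ℝ) : M h (p + 1) f = M (h / 2) p (f - Q h f) := by
  induction p with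
  | zero => simp [M]
  | succ p ih => rw [M, ih, M, div_div, ← pow_succ']

lemma M_eq_sub_sum {f : ℝ → ℝ} (hf : IsBoundedFun f) (h : ℝ) (p : ℕ) :
    M h p f = f - ∑ j ∈ Finset.range p, M (h / 2 ^ (j + 1)) (p - 1 - j) (Q (h / 2 ^ j) f) := by
  induction p generalizing h with
  | zero => simp [M]
  | succ p ih =>
    rw [M_succ, M_sub hf (isBoundedFun_Q hf h), ih, Finset.sum_range_succ']
    have hh (j : ℕ) : h / 2 / 2 ^ j = h / 2 ^ (j + 1) := by rw [div_div, pow_succ']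
    have hp (j : ℕ) : p + 1 - 1 - (j + 1) = p - 1 - j := by omega
    simp only [hh, hp]
    simp only [zero_add, pow_one, pow_zero, div_one, Nat.add_sub_cancel, Nat.sub_zero]
    abel

lemma Q_congr {f g : ℝ → ℝ} {h : ℝ} (hfg : ∀ ℓ : ℤ, f (h * ℓ) = g (h * ℓ)) : Q h f = Q h g := by
  funext x
  simp only [Q, hfg]

lemma Q_c_eq_of_modEq {N m m' : ℕ} (hm : m ≡ m' [MOD N]) :
    Q (1 / N) (c m) = Q (1 / N) (c m') := by
  refine Q_congr fun ℓ => ?_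
  rcases eq_or_ne N 0 with rfl | hN
  · simp [c]
  obtain ⟨k, hk⟩ := Nat.modEq_iff_dvd.1 hm
  have hk' : (m' : ℝ) = m + N * k := by exact_mod_cast sub_eq_iff_eq_add'.1 hk
  rw [c, c, ← cos_add_int_mul_two_pi _ (k * ℓ)]
  congr 1
  rw [hk']
  push_cast
  field_simp

theorem multilevel_error_high_frequency_general (l n : ℕ)
    (p : ℕ) (hp2 : p ≤ l + 1) :
    M 1 p (c (2 ^ l + n)) =
      c (2 ^ l + n) -
        ∑ j ∈ Finset.range p,
          M (1 / 2 ^ (j + 1)) (p - 1 - j) (Q (1 / 2 ^ j) (c (n % 2 ^ j))) := by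
  rw [M_eq_sub_sum (isBoundedFun_c _)]
  congr 1
  refine Finset.sum_congr rfl fun j hj => ?_
  have hjl : j ≤ l := by have := Finset.mem_range.1 hj; omega
  have hmod : 2 ^ l + n ≡ n % 2 ^ j [MOD 2 ^ j] := by
    simpa using (Nat.modEq_zero_iff_dvd.2 (pow_dvd_pow 2 hjl)).add (Nat.mod_modEq n _).symm
  exact_mod_cast congrArg (M _ _) (Q_c_eq_of_modEq hmod)

/-- For `m = 2^ℓ + n` with `0 ≤ n < 2^ℓ` and `1 ≤ p ≤ ℓ+1`,
`M_{1,p} c_m = c_m − Σ_{j=0}^{p−1} M_{1/2^{j+1}, p−1−j} Q_{1/2^j} c_{n mod 2^j}`. -/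
theorem multilevel_error_high_frequency (l n : ℕ) (hn : n < 2 ^ l)
    (p : ℕ) (hp1 : 1 ≤ p) (hp2 : p ≤ l + 1) :
    M 1 p (c (2 ^ l + n)) =
      c (2 ^ l + n) -
        ∑ j ∈ Finset.range p,
          M (1 / 2 ^ (j + 1)) (p - 1 - j) (Q (1 / 2 ^ j) (c (n % 2 ^ j))) :=
  multilevel_error_high_frequency_general l n p hp2
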